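/- Let G = (V,E) be a finite connected graph, π a strictly positive probability distribution on V, T a BFS spanning tree of G rooted at o with diameter D, and ε ∈ (0,1). Define the weighting w on T-edges plus self-loops by w({x}) = π(x) for each vertex x and w({x,prt(x)}) = (ε/(2D))·π(T_x) for x ≠ o. Then the total weight satisfies w(V) ≤ 1+ε, and the induced stationary distribution π_w(x) = w(x)/w(V) satisfies π_w(x)/π(x) ≥ 1/(1+ε) ≥ 1−ε for every vertex x; in particular the total variation distance between π_w and π is at most ε. -/

import Mathlib

open Finset
open scoped Classical

/-- The subtree rooted at `x` in a rooted tree given by a parent map `prt`. -/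
noncomputable def subtree {V : Type*} [Fintype V] (prt : V → V) (x : V) : Finset V :=
  univ.filter (fun z => ∃ n, prt^[n] z = x)

/-- The simple graph associated with the parent map `prt`. -/
def prtGraph {V : Type*} (prt : V → V) : SimpleGraph V :=
  SimpleGraph.fromRel (fun x y => prt x = y ∨ prt y = x)

/-- The diameter `D` of the tree given by `prt`. -/
noncomputable def treeDiam {V : Type*} [Fintype V] (prt : V → V) : ℕ :=
  univ.sup fun x => univ.sup fun y => (prtGraph prt).dist x y

/-- The weight of the edge from `x ≠ o` to its parent: `(ε/(2D))·π(T_x)`. -/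
noncomputable def bfsEdgeW {V : Type*} [Fintype V] (prt : V → V) (o : V) (π : V → ℝ)
    (ε : ℝ) (x : V) : ℝ :=
  if x = o then 0 else (ε / (2 * treeDiam prt)) * ∑ z ∈ subtree prt x, π z

/-- The total weight at vertex `x`: the self-loop weight `π(x)`, plus the weight of the edge to
the parent of `x`, plus the weights of the edges to the children of `x`. -/
noncomputable def bfsVertexW {V : Type*} [Fintype V] (prt : V → V) (o : V) (π : V → ℝ)
    (ε : ℝ) (x : V) : ℝ :=
  π x + bfsEdgeW prt o π ε x +
    ∑ c ∈ univ.filter (fun c => prt c = x ∧ c ≠ x), bfsEdgeW prt o π ε c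

/-!
A vertex `z` lies in the subtree `T_c` of a non-root vertex `c` exactly when `c` lies on the tree
path from `z` to the root, so `∑_{c ≠ o} π(T_c) = ∑_z π(z)·depth(z) ≤ D`. Hence the tree edges
carry total weight at most `ε/2`; each edge is counted at both of its endpoints, so
`w(V) = 1 + 2·(edge weight) ≤ 1 + ε`. As `w(x) ≥ π(x)`, this gives `π_w(x) ≥ π(x)/(1+ε)`, and
the total variation bound follows from these one-sided lower bounds.
-/

section ParentMap

variable {V : Type*} {prt : V → V} {o : V}

lemma prtGraph_reachable_of_iterate_eq {z x : V} {n : ℕ} (h : prt^[n] z = x) :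
    (prtGraph prt).Reachable z x := by
  induction n generalizing z with
  | zero => exact h ▸ SimpleGraph.Reachable.refl z
  | succ n ih =>
    rw [Function.iterate_succ_apply] at h
    refine SimpleGraph.Reachable.trans ?_ (ih h)
    by_cases hz : z = prt z
    · rw [← hz]
    · exact ((SimpleGraph.fromRel_adj _ _ _).2 ⟨hz, Or.inl (Or.inl rfl)⟩).reachable

lemma dist_le_treeDiam [Fintype V] (x y : V) : (prtGraph prt).dist x y ≤ treeDiam prt :=
  (le_sup (f := fun y => (prtGraph prt).dist x y) (mem_univ y)).trans
    (le_sup (f := fun x => univ.sup fun y => (prtGraph prt).dist x y) (mem_univ x))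

noncomputable def prtDepth (hreach : ∀ z, ∃ n, prt^[n] z = o) (z : V) : ℕ :=
  Nat.find (hreach z)

/-- The vertices of the tree path from `z` to the root, root excluded; each `c` stands for the
edge from `c` to its parent. -/
noncomputable def rootPath [Fintype V] (prt : V → V) (o z : V) : Finset V :=
  univ.filter fun c => c ≠ o ∧ ∃ n, prt^[n] z = c

variable (hreach : ∀ z, ∃ n, prt^[n] z = o)
include hreach

lemma iterate_prtDepth (z : V) : prt^[prtDepth hreach z] z = o :=
  Nat.find_spec (hreach z)

lemma prtDepth_le_of_iterate_eq {z : V} {n : ℕ} (h : prt^[n] z = o) : prtDepth hreach z ≤ n :=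
  Nat.find_min' _ h

lemma iterate_ne_of_lt_prtDepth {z : V} {n : ℕ} (h : n < prtDepth hreach z) : prt^[n] z ≠ o :=
  Nat.find_min (hreach z) h

lemma prtDepth_root : prtDepth hreach o = 0 :=
  Nat.le_zero.1 (prtDepth_le_of_iterate_eq hreach rfl)

lemma eq_root_of_prt_eq_self {c : V} (hc : prt c = c) : c = o := by
  obtain ⟨n, hn⟩ := hreach c
  rwa [Function.iterate_fixed hc] at hn

lemma iterate_eq_root_of_prtDepth_le (hroot : prt o = o) {z : V} {n : ℕ}
    (h : prtDepth hreach z ≤ n) : prt^[n] z = o := by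
  rw [← Nat.sub_add_cancel h, Function.iterate_add_apply, iterate_prtDepth,
    Function.iterate_fixed hroot]

lemma prtDepth_prt_le (hroot : prt o = o) (z : V) :
    prtDepth hreach (prt z) ≤ prtDepth hreach z :=
  prtDepth_le_of_iterate_eq hreach <| by
    rw [← Function.iterate_succ_apply, Function.iterate_succ_apply', iterate_prtDepth, hroot]

lemma prtDepth_le_prtDepth_prt_add_one (z : V) :
    prtDepth hreach z ≤ prtDepth hreach (prt z) + 1 :=
  prtDepth_le_of_iterate_eq hreach <| by rw [Function.iterate_succ_apply, iterate_prtDepth]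

lemma prtDepth_le_of_adj (hroot : prt o = o) {a v : V} (h : (prtGraph prt).Adj a v) :
    prtDepth hreach a ≤ prtDepth hreach v + 1 := by
  rcases ((SimpleGraph.fromRel_adj _ _ _).1 h).2 with (rfl | rfl) | (rfl | rfl)
  · exact prtDepth_le_prtDepth_prt_add_one hreach a
  · exact (prtDepth_prt_le hreach hroot v).trans (Nat.le_succ _)
  · exact (prtDepth_prt_le hreach hroot v).trans (Nat.le_succ _)
  · exact prtDepth_le_prtDepth_prt_add_one hreach a

lemma prtDepth_le_add_length (hroot : prt o = o) {a b : V} (w : (prtGraph prt).Walk a b) :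
    prtDepth hreach a ≤ prtDepth hreach b + w.length := by
  induction w with
  | nil => simp
  | cons h _ ih =>
    have := prtDepth_le_of_adj hreach hroot h
    rw [SimpleGraph.Walk.length_cons]
    omega

lemma prtDepth_le_dist (hroot : prt o = o) (z : V) :
    prtDepth hreach z ≤ (prtGraph prt).dist z o := by
  obtain ⟨w, hw⟩ :=
    (prtGraph_reachable_of_iterate_eq (iterate_prtDepth hreach z)).exists_walk_length_eq_dist
  simpa [prtDepth_root, hw] using prtDepth_le_add_length hreach hroot w

lemma iterate_injOn_range_prtDepth (z : V) :
    Set.InjOn (prt^[·] z) (range (prtDepth hreach z)) := by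
  -- a repetition `prt^[a] z = prt^[b] z` with `a < b` would reach the root in fewer steps
  have key : ∀ a b, a < b → b < prtDepth hreach z → prt^[a] z ≠ prt^[b] z := by
    intro a b hab hb heq
    refine iterate_ne_of_lt_prtDepth hreach (z := z) (n := prtDepth hreach z - b + a) (by omega) ?_
    rw [Function.iterate_add_apply, heq, ← Function.iterate_add_apply, Nat.sub_add_cancel hb.le,
      iterate_prtDepth]
  intro a ha b hb heq
  simp only [coe_range, Set.mem_Iio] at ha hb
  rcases lt_trichotomy a b with h | h | h
  · exact absurd heq (key a b h hb)
  · exact h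
  · exact absurd heq.symm (key b a h ha)

variable [Fintype V]

lemma rootPath_eq_image (hroot : prt o = o) (z : V) :
    rootPath prt o z = (range (prtDepth hreach z)).image (prt^[·] z) := by
  ext c
  simp only [rootPath, mem_filter, mem_univ, true_and, mem_image, mem_range]
  constructor
  · rintro ⟨hc, n, rfl⟩
    exact ⟨n, not_le.1 fun hn => hc (iterate_eq_root_of_prtDepth_le hreach hroot hn), rfl⟩
  · rintro ⟨n, hn, rfl⟩
    exact ⟨iterate_ne_of_lt_prtDepth hreach hn, n, rfl⟩

lemma card_rootPath (hroot : prt o = o) (z : V) : #(rootPath prt o z) = prtDepth hreach z := by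
  rw [rootPath_eq_image hreach hroot, card_image_of_injOn (iterate_injOn_range_prtDepth hreach z),
    card_range]

lemma sum_subtree_eq_sum_prtDepth_nsmul {M : Type*} [AddCommMonoid M] (hroot : prt o = o)
    (f : V → M) :
    ∑ c ∈ univ.filter (· ≠ o), ∑ z ∈ subtree prt c, f z = ∑ z, prtDepth hreach z • f z := by
  rw [sum_comm' (s' := rootPath prt o) (t' := univ) fun c z => by simp [subtree, rootPath]]
  simp only [sum_const, card_rootPath hreach hroot]

lemma sum_subtree_le_treeDiam_mul (hroot : prt o = o) {f : V → ℝ} (hf : ∀ z, 0 ≤ f z) :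
    ∑ c ∈ univ.filter (· ≠ o), ∑ z ∈ subtree prt c, f z ≤ treeDiam prt * ∑ z, f z := by
  rw [sum_subtree_eq_sum_prtDepth_nsmul hreach hroot, mul_sum]
  refine sum_le_sum fun z _ => ?_
  rw [nsmul_eq_mul]
  gcongr
  · exact hf z
  · exact (prtDepth_le_dist hreach hroot z).trans (dist_le_treeDiam z o)

end ParentMap

section Weighting

variable {V : Type*} [Fintype V] {prt : V → V} {o : V} {π : V → ℝ} {ε : ℝ}

lemma bfsEdgeW_root : bfsEdgeW prt o π ε o = 0 := if_pos rfl

lemma bfsEdgeW_nonneg (hπ : ∀ x, 0 ≤ π x) (hε : 0 ≤ ε) (x : V) : 0 ≤ bfsEdgeW prt o π ε x := by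
  unfold bfsEdgeW
  split_ifs
  · exact le_rfl
  · exact mul_nonneg (by positivity) (sum_nonneg fun z _ => hπ z)

lemma le_bfsVertexW (hπ : ∀ x, 0 ≤ π x) (hε : 0 ≤ ε) (x : V) : π x ≤ bfsVertexW prt o π ε x := by
  have hparent := bfsEdgeW_nonneg (prt := prt) (o := o) hπ hε x
  have hchildren : 0 ≤ ∑ c ∈ univ.filter (fun c => prt c = x ∧ c ≠ x), bfsEdgeW prt o π ε c :=
    sum_nonneg fun c _ => bfsEdgeW_nonneg hπ hε c
  unfold bfsVertexW
  linarith

lemma sum_bfsEdgeW_le (hreach : ∀ z, ∃ n, prt^[n] z = o) (hroot : prt o = o)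
    (hπ : ∀ x, 0 ≤ π x) (hε : 0 ≤ ε) :
    ∑ x, bfsEdgeW prt o π ε x ≤ ε / 2 * ∑ x, π x := by
  set D : ℝ := (treeDiam prt : ℝ)
  have hscale : ε / (2 * D) * D ≤ ε / 2 := by
    rcases eq_or_ne D 0 with hD | hD
    · rw [hD, mul_zero]
      positivity
    · exact (by field_simp : ε / (2 * D) * D = ε / 2).le
  calc ∑ x, bfsEdgeW prt o π ε x
      = ε / (2 * D) * ∑ c ∈ univ.filter (· ≠ o), ∑ z ∈ subtree prt c, π z := by
        rw [mul_sum, sum_filter]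
        exact sum_congr rfl fun c _ => by rw [bfsEdgeW, ite_not]
    _ ≤ ε / (2 * D) * (D * ∑ x, π x) :=
        mul_le_mul_of_nonneg_left (sum_subtree_le_treeDiam_mul hreach hroot hπ) (by positivity)
    _ = ε / (2 * D) * D * ∑ x, π x := (mul_assoc _ _ _).symm
    _ ≤ ε / 2 * ∑ x, π x := mul_le_mul_of_nonneg_right hscale (sum_nonneg fun x _ => hπ x)

lemma sum_bfsVertexW (hreach : ∀ z, ∃ n, prt^[n] z = o) :
    ∑ x, bfsVertexW prt o π ε x = ∑ x, π x + 2 * ∑ x, bfsEdgeW prt o π ε x := by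
  -- every edge `c — prt c` is counted once at `c` and once among the children of `prt c`
  have hchildren : ∑ x, ∑ c ∈ univ.filter (fun c => prt c = x ∧ c ≠ x), bfsEdgeW prt o π ε c
      = ∑ c, bfsEdgeW prt o π ε c := by
    rw [sum_comm' (s' := fun c => {prt c}) (t' := univ.filter fun c => prt c ≠ c)
      fun x c => by
        simp only [mem_univ, mem_filter, mem_singleton, true_and]
        constructor <;> rintro ⟨rfl, h⟩ <;> exact ⟨rfl, Ne.symm h⟩]
    simp only [sum_singleton]
    refine sum_filter_of_ne fun c _ hc hfix => hc ?_
    rw [eq_root_of_prt_eq_self hreach hfix, bfsEdgeW_root]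
  simp only [bfsVertexW, sum_add_distrib, hchildren]
  ring

end Weighting

lemma sum_abs_sub_le_of_sub_le {ι : Type*} (s : Finset ι) {p q c : ι → ℝ}
    (hsum : ∑ i ∈ s, q i = ∑ i ∈ s, p i) (hc : ∀ i ∈ s, 0 ≤ c i) (h : ∀ i ∈ s, p i - q i ≤ c i) :
    ∑ i ∈ s, |q i - p i| ≤ 2 * ∑ i ∈ s, c i :=
  calc ∑ i ∈ s, |q i - p i|
      ≤ ∑ i ∈ s, (q i - p i + 2 * c i) := sum_le_sum fun i hi =>
        abs_le'.2 ⟨by linarith [hc i hi], by linarith [h i hi]⟩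
    _ = 2 * ∑ i ∈ s, c i := by rw [sum_add_distrib, sum_sub_distrib, hsum, mul_sum]; ring

theorem bfs_weighting_almost_uniform_general {V : Type*} [Fintype V]
    (π : V → ℝ) (hpos : ∀ x, 0 < π x) (hsum : ∑ x, π x = 1)
    (prt : V → V) (o : V)
    (hroot : prt o = o) (hreach : ∀ z, ∃ n, prt^[n] z = o)
    (ε : ℝ) (hε0 : 0 < ε) :
    (∑ x, bfsVertexW prt o π ε x) ≤ 1 + ε ∧
    (∀ x, (bfsVertexW prt o π ε x / ∑ y, bfsVertexW prt o π ε y) / π x ≥ 1 / (1 + ε)) ∧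
    (1 / (1 + ε) : ℝ) ≥ 1 - ε ∧
    (1 / 2) * ∑ x, |bfsVertexW prt o π ε x / (∑ y, bfsVertexW prt o π ε y) - π x| ≤ ε := by
  have hπ : ∀ x, 0 ≤ π x := fun x => (hpos x).le
  have hE := sum_bfsEdgeW_le hreach hroot hπ hε0.le
  have hEnn := sum_nonneg fun x (_ : x ∈ univ) => bfsEdgeW_nonneg (prt := prt) (o := o) hπ hε0.le x
  have hW := sum_bfsVertexW (π := π) (ε := ε) hreach
  rw [hsum] at hE hW
  set w := bfsVertexW prt o π ε
  have hWle : ∑ x, w x ≤ 1 + ε := by linarith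
  have hWpos : 0 < ∑ x, w x := by linarith
  have hinv : 1 - ε ≤ 1 / (1 + ε) := by
    rw [le_div_iff₀ (by positivity)]
    nlinarith
  have hratio : ∀ x, π x * (1 / (1 + ε)) ≤ w x / ∑ y, w y := fun x => by
    rw [mul_one_div]
    exact div_le_div₀ ((hπ x).trans (le_bfsVertexW hπ hε0.le x)) (le_bfsVertexW hπ hε0.le x)
      hWpos hWle
  refine ⟨hWle, fun x => ?_, hinv, ?_⟩
  · rw [ge_iff_le, le_div_iff₀ (hpos x), mul_comm]
    exact hratio x
  · have hq : ∑ x, w x / ∑ y, w y = ∑ x, π x := by rw [← sum_div, div_self hWpos.ne', hsum]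
    have hTV := sum_abs_sub_le_of_sub_le univ hq (c := fun x => ε * π x)
      (fun x _ => mul_nonneg hε0.le (hπ x))
      (fun x _ => by nlinarith [hratio x, mul_le_mul_of_nonneg_left hinv (hπ x)])
    rw [← mul_sum, hsum] at hTV
    linarith

/-- For the weighting built from self-loops `π(x)` and BFS-tree edges weighted
`(ε/(2D))·π(T_x)`: the total weight is at most `1 + ε`, the induced stationary distribution
`π_w` satisfies `π_w(x)/π(x) ≥ 1/(1+ε) ≥ 1−ε` at every vertex, and `‖π_w − π‖_TV ≤ ε`. -/
theorem bfs_weighting_almost_uniform {V : Type*} [Fintype V]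
    (G : SimpleGraph V) (hG : G.Connected)
    (π : V → ℝ) (hpos : ∀ x, 0 < π x) (hsum : ∑ x, π x = 1)
    (prt : V → V) (o : V)
    (hroot : prt o = o) (hreach : ∀ z, ∃ n, prt^[n] z = o)
    (htree : ∀ x, x ≠ o → G.Adj x (prt x))
    (hBFS : ∀ x, x ≠ o → G.dist (prt x) o + 1 = G.dist x o)
    (ε : ℝ) (hε0 : 0 < ε) (hε1 : ε < 1) :
    (∑ x, bfsVertexW prt o π ε x) ≤ 1 + ε ∧
    (∀ x, (bfsVertexW prt o π ε x / ∑ y, bfsVertexW prt o π ε y) / π x ≥ 1 / (1 + ε)) ∧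
    (1 / (1 + ε) : ℝ) ≥ 1 - ε ∧
    (1 / 2) * ∑ x, |bfsVertexW prt o π ε x / (∑ y, bfsVertexW prt o π ε y) - π x| ≤ ε :=
  bfs_weighting_almost_uniform_general π hpos hsum prt o hroot hreach ε hε0
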